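/- arXiv:2405.16469 — 3 statements merged into one kernel-verified Lean document; each statement's English description precedes it below -/
import Mathlib

section
/- For n ≥ 2, E[rₙ] = (3nτ − (n−2)ρ_S)/(2(n+1)); in particular rₙ is a biased but asymptotically unbiased estimator of r = (3τ − ρ_S)/2, i.e. E[rₙ] → r as n → ∞. -/
/-!
Write `c i j = 1{Xⱼ ≤ Xᵢ} - 1{Yⱼ ≤ Yᵢ}`, so that `Rᵢ - Sᵢ = ∑ⱼ c i j` and, off the null set of
ties, `sgn(Xᵢ - Xⱼ) sgn(Yᵢ - Yⱼ) = 1 - 2 (c i j)²`. Both statistics thus reduce to the moments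
`E[(c i j)²] = (1 - τ)/2` and `E[c i j · c i k] = (1 - ρ_S)/6` for distinct `i, j, k`. Independence
turns the probabilities of `{Xⱼ ≤ Xᵢ, Yⱼ ≤ Yᵢ}` and `{Xⱼ ≤ Xᵢ, Yₖ ≤ Yᵢ}` into `E F(X,Y)` and
`E H(X) G(Y)`, while continuity of the marginals and exchangeability give `P(Xⱼ ≤ Xᵢ) = 1/2` and
`P(Xⱼ ≤ Xᵢ, Xₖ ≤ Xᵢ) = 1/3`. Summing, `E τₙ = τ` and `E ρₙ = (3τ + (n-2)ρ_S)/(n+1)`.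
-/

open MeasureTheory ProbabilityTheory Finset Filter

section IndependentLaws

variable {Ω ι β : Type*} [MeasurableSpace Ω] [MeasurableSpace β] {μ : Measure Ω} [IsFiniteMeasure μ]
  {Z : ι → Ω → β} {ν : Measure β}

theorem ProbabilityTheory.iIndepFun.map_pair_eq_prod (hind : iIndepFun Z μ)
    (hZ : ∀ i, Measurable (Z i)) (hlaw : ∀ i, μ.map (Z i) = ν) {i j : ι} (hij : i ≠ j) :
    μ.map (fun ω => (Z i ω, Z j ω)) = ν.prod ν := by
  rw [(indepFun_iff_map_prod_eq_prod_map_map (hZ i).aemeasurable (hZ j).aemeasurable).1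
    (hind.indepFun hij), hlaw, hlaw]

theorem ProbabilityTheory.iIndepFun.map_triple_eq_prod [SFinite ν] (hind : iIndepFun Z μ)
    (hZ : ∀ i, Measurable (Z i)) (hlaw : ∀ i, μ.map (Z i) = ν) {i j k : ι}
    (hij : i ≠ j) (hik : i ≠ k) (hjk : j ≠ k) :
    μ.map (fun ω => (Z i ω, Z j ω, Z k ω)) = ν.prod (ν.prod ν) := by
  rw [(indepFun_iff_map_prod_eq_prod_map_map (hZ i).aemeasurable
    ((hZ j).prodMk (hZ k)).aemeasurable).1 (hind.indepFun_prodMk hZ j k i hij.symm hik.symm).symm,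
    hlaw, hind.map_pair_eq_prod hZ hlaw hjk]

end IndependentLaws

theorem MeasureTheory.Measure.prod_diagonal_eq_zero {α : Type*} [MeasurableSpace α]
    [MeasurableEq α] (μ ν : Measure α) [SFinite ν] [NullSingletonClass ν] :
    (μ.prod ν) (Set.diagonal α) = 0 := by
  rw [Measure.prod_apply measurableSet_diagonal]
  simp [Set.preimage, Set.diagonal]

theorem MeasureTheory.Measure.nullSingletonClass_map_fst {α β : Type*} [MeasurableSpace α]
    [MeasurableSpace β] {ν : Measure (α × β)} {μa : Measure α} {μb : Measure β}
    [MeasurableSingletonClass α] [SFinite μb] [NullSingletonClass μa] (h : ν ≪ μa.prod μb) :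
    NullSingletonClass (ν.map Prod.fst) where
  measure_singleton c := by
    rw [Measure.map_apply measurable_fst (measurableSet_singleton c), ← Set.prod_univ]
    exact h (by simp [Measure.prod_prod])

theorem MeasureTheory.Measure.nullSingletonClass_map_snd {α β : Type*} [MeasurableSpace α]
    [MeasurableSpace β] {ν : Measure (α × β)} {μa : Measure α} {μb : Measure β}
    [MeasurableSingletonClass β] [SFinite μb] [NullSingletonClass μb] (h : ν ≪ μa.prod μb) :
    NullSingletonClass (ν.map Prod.snd) where
  measure_singleton c := by
    rw [Measure.map_apply measurable_snd (measurableSet_singleton c), ← Set.univ_prod]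
    exact h (by simp [Measure.prod_prod])

theorem MeasureTheory.Measure.measureReal_prod_apply {α β : Type*} [MeasurableSpace α]
    [MeasurableSpace β] {μ : Measure α} {ν : Measure β} [IsFiniteMeasure ν]
    {s : Set (α × β)} (hs : MeasurableSet s) :
    (μ.prod ν).real s = ∫ x, ν.real (Prod.mk x ⁻¹' s) ∂μ := by
  rw [measureReal_def, Measure.prod_apply hs, ← integral_toReal
    (measurable_measure_prodMk_left hs).aemeasurable (ae_of_all _ fun _ => measure_lt_top _ _)]
  rfl

section NoTies

variable {Ω ι : Type*} [MeasurableSpace Ω] {μ : Measure Ω} [IsProbabilityMeasure μ]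
  {W : ι → Ω → ℝ} {η : Measure ℝ} [SFinite η] [NullSingletonClass η]
  (hind : iIndepFun W μ) (hW : ∀ i, Measurable (W i)) (hlaw : ∀ i, μ.map (W i) = η)
include hind hW hlaw

theorem ProbabilityTheory.iIndepFun.measure_eq_eq_zero {i j : ι} (hij : i ≠ j) :
    μ {ω | W i ω = W j ω} = 0 := by
  change μ ((fun ω => (W i ω, W j ω)) ⁻¹' Set.diagonal ℝ) = 0
  rw [← Measure.map_apply_of_aemeasurable ((hW i).prodMk (hW j)).aemeasurable
    measurableSet_diagonal, hind.map_pair_eq_prod hW hlaw hij, Measure.prod_diagonal_eq_zero]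

theorem ProbabilityTheory.iIndepFun.measureReal_le_eq_half {i j : ι} (hij : i ≠ j) :
    μ.real {ω | W j ω ≤ W i ω} = 1 / 2 := by
  have hpair : ∀ {a b : ι}, a ≠ b →
      μ.real {ω | W b ω ≤ W a ω} = (η.prod η).real {p | p.2 ≤ p.1} := fun hab => by
    rw [← hind.map_pair_eq_prod hW hlaw hab, map_measureReal_apply ((hW _).prodMk (hW _))
      (measurableSet_le measurable_snd measurable_fst)]
    rfl
  have hcover : {ω | W j ω ≤ W i ω} ∪ {ω | W i ω ≤ W j ω} = Set.univ := by
    ext ω; simp [le_total]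
  have htie : μ.real ({ω | W j ω ≤ W i ω} ∩ {ω | W i ω ≤ W j ω}) = 0 := by
    rw [measureReal_def, measure_mono_null (fun ω hω => le_antisymm hω.2 hω.1)
      (hind.measure_eq_eq_zero hW hlaw hij), ENNReal.toReal_zero]
  have := measureReal_union_add_inter (μ := μ) (s := {ω | W j ω ≤ W i ω})
    (measurableSet_le (hW i) (hW j))
  rw [hcover, htie, probReal_univ, hpair hij.symm] at this
  linarith [hpair hij]

theorem ProbabilityTheory.iIndepFun.measureReal_le_and_le_eq_third {i j k : ι}
    (hij : i ≠ j) (hik : i ≠ k) (hjk : j ≠ k) :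
    μ.real {ω | W j ω ≤ W i ω ∧ W k ω ≤ W i ω} = 1 / 3 := by
  have htriple : ∀ {a b c : ι}, a ≠ b → a ≠ c → b ≠ c →
      μ.real {ω | W b ω ≤ W a ω ∧ W c ω ≤ W a ω}
        = (η.prod (η.prod η)).real {p | p.2.1 ≤ p.1 ∧ p.2.2 ≤ p.1} := fun hab hac hbc => by
    have hS : MeasurableSet {p : ℝ × ℝ × ℝ | p.2.1 ≤ p.1 ∧ p.2.2 ≤ p.1} :=
      (measurableSet_le measurable_snd.fst measurable_fst).inter
        (measurableSet_le measurable_snd.snd measurable_fst)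
    rw [← hind.map_triple_eq_prod hW hlaw hab hac hbc, map_measureReal_apply (by fun_prop) hS]
    rfl
  have hnull : ∀ {s : Set Ω} {a b : ι}, a ≠ b → s ⊆ {ω | W a ω = W b ω} → μ.real s = 0 :=
    fun hab hs => by
      rw [measureReal_def, measure_mono_null hs (hind.measure_eq_eq_zero hW hlaw hab),
        ENNReal.toReal_zero]
  -- The events "`W i`, resp. `W j`, `W k`, is largest" are equally likely by `htriple`,
  -- cover `Ω`, and overlap only on ties.
  set A := {ω | W j ω ≤ W i ω ∧ W k ω ≤ W i ω}
  set B := {ω | W i ω ≤ W j ω ∧ W k ω ≤ W j ω}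
  set C := {ω | W i ω ≤ W k ω ∧ W j ω ≤ W k ω}
  have hcover : A ∪ B ∪ C = Set.univ := by
    ext ω; simp only [A, B, C, Set.mem_union, Set.mem_ofPred_eq, Set.mem_univ, iff_true]; grind
  have hAB : μ.real (A ∩ B) = 0 := hnull hij fun ω hω => le_antisymm hω.2.1 hω.1.1
  have hABC : μ.real ((A ∪ B) ∩ C) = 0 := by
    rw [Set.union_inter_distrib_right]
    exact measureReal_union_null (hnull hik fun ω hω => le_antisymm hω.2.1 hω.1.2)
      (hnull hjk fun ω hω => le_antisymm hω.2.2 hω.1.2)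
  have h1 := measureReal_union_add_inter (μ := μ) (s := A) (t := B)
    ((measurableSet_le (hW i) (hW j)).inter (measurableSet_le (hW k) (hW j)))
  have h2 := measureReal_union_add_inter (μ := μ) (s := A ∪ B) (t := C)
    ((measurableSet_le (hW i) (hW k)).inter (measurableSet_le (hW j) (hW k)))
  rw [hcover, probReal_univ, hABC] at h2
  rw [hAB] at h1
  have hB : μ.real B = μ.real A := (htriple hij.symm hjk hik).trans (htriple hij hik hjk).symm
  have hC : μ.real C = μ.real A := (htriple hik.symm hjk.symm hij).trans (htriple hij hik hjk).symm
  linarith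

end NoTies

theorem Set.indicator_sub_mul_indicator_sub {α : Type*} (A B C D : Set α) :
    (A.indicator 1 - B.indicator 1) * (C.indicator 1 - D.indicator 1) = ((A ∩ C).indicator 1
      - (A ∩ D).indicator 1 - (B ∩ C).indicator 1 + (B ∩ D).indicator 1 : α → ℝ) := by
  simp only [Set.inter_indicator_one]; ring

section IndicatorMoments

variable {Ω : Type*} [MeasurableSpace Ω] {μ : Measure Ω} [IsFiniteMeasure μ] {A B C D : Set Ω}

theorem MeasureTheory.integrable_indicator_sub_mul_indicator_sub (hA : MeasurableSet A)
    (hB : MeasurableSet B) (hC : MeasurableSet C) (hD : MeasurableSet D) :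
    Integrable ((A.indicator 1 - B.indicator 1) * (C.indicator 1 - D.indicator 1) : Ω → ℝ) μ := by
  have hint : ∀ {s : Set Ω}, MeasurableSet s → Integrable (s.indicator (1 : Ω → ℝ)) μ :=
    fun hs => (integrable_const 1).indicator hs
  rw [Set.indicator_sub_mul_indicator_sub]
  exact (((hint (hA.inter hC)).sub (hint (hA.inter hD))).sub (hint (hB.inter hC))).add
    (hint (hB.inter hD))

theorem MeasureTheory.integral_indicator_sub_mul_indicator_sub (hA : MeasurableSet A)
    (hB : MeasurableSet B) (hC : MeasurableSet C) (hD : MeasurableSet D) :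
    ∫ ω, ((A.indicator 1 - B.indicator 1) * (C.indicator 1 - D.indicator 1) : Ω → ℝ) ω ∂μ
      = μ.real (A ∩ C) - μ.real (A ∩ D) - μ.real (B ∩ C) + μ.real (B ∩ D) := by
  have hint : ∀ {s : Set Ω}, MeasurableSet s → Integrable (s.indicator (1 : Ω → ℝ)) μ :=
    fun hs => (integrable_const 1).indicator hs
  rw [Set.indicator_sub_mul_indicator_sub, integral_add'
      (((hint (hA.inter hC)).sub (hint (hA.inter hD))).sub (hint (hB.inter hC)))
      (hint (hB.inter hD)), integral_sub' ((hint (hA.inter hC)).sub (hint (hA.inter hD)))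
      (hint (hB.inter hC)), integral_sub' (hint (hA.inter hC)) (hint (hA.inter hD))]
  simp only [integral_indicator_one, hA.inter hC, hA.inter hD, hB.inter hC, hB.inter hD]

end IndicatorMoments

section SecondMoment

variable {Ω ι : Type*} [MeasurableSpace Ω] {μ : Measure Ω} {s : Finset ι} {c : ι → Ω → ℝ}

theorem MeasureTheory.integrable_sq_sum
    (hint : ∀ j ∈ s, ∀ k ∈ s, Integrable (fun ω => c j ω * c k ω) μ) :
    Integrable (fun ω => (∑ j ∈ s, c j ω) ^ 2) μ := by
  simp_rw [sq, sum_mul_sum]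
  exact integrable_finsetSum _ fun j hj => integrable_finsetSum _ fun k hk => hint j hj k hk

theorem MeasureTheory.integral_sq_sum_eq [DecidableEq ι] {α β : ℝ}
    (hint : ∀ j ∈ s, ∀ k ∈ s, Integrable (fun ω => c j ω * c k ω) μ)
    (hdiag : ∀ j ∈ s, ∫ ω, c j ω * c j ω ∂μ = α)
    (hoff : ∀ j ∈ s, ∀ k ∈ s, j ≠ k → ∫ ω, c j ω * c k ω ∂μ = β) :
    ∫ ω, (∑ j ∈ s, c j ω) ^ 2 ∂μ = #s * (α + (#s - 1) * β) := by
  simp_rw [sq, sum_mul_sum]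
  rw [integral_finsetSum _ fun j hj => integrable_finsetSum _ fun k hk => hint j hj k hk]
  have hrow : ∀ j ∈ s, ∫ ω, ∑ k ∈ s, c j ω * c k ω ∂μ = α + (#s - 1) * β := fun j hj => by
    rw [integral_finsetSum _ (hint j hj), ← add_sum_erase s _ hj, hdiag j hj,
      sum_congr rfl fun k hk => hoff j hj k (mem_of_mem_erase hk) (ne_of_mem_erase hk).symm,
      sum_const, card_erase_of_mem hj, nsmul_eq_mul, Nat.cast_pred (card_pos.2 ⟨j, hj⟩)]
  rw [sum_congr rfl hrow, sum_const, nsmul_eq_mul]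

end SecondMoment

theorem Real.sign_sub_mul_sign_sub {x x' y y' : ℝ} (hx : x ≠ x') (hy : y ≠ y') :
    Real.sign (x - x') * Real.sign (y - y')
      = 1 - 2 * ((if x' ≤ x then 1 else 0) - (if y' ≤ y then 1 else 0)) ^ 2 := by
  rcases hx.lt_or_gt with hx | hx <;> rcases hy.lt_or_gt with hy | hy <;>
    simp [Real.sign_of_neg, Real.sign_of_pos, hx, hy, hx.le, hy.le, hx.not_ge, hy.not_ge] <;>
    norm_num

namespace RankCorrelation

/-- `Iic z` is taken in the product order, so `ν.real (Iic z)` is the joint CDF at `z`. -/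
noncomputable def kendallTau (ν : Measure (ℝ × ℝ)) : ℝ := 4 * ∫ z, ν.real (Set.Iic z) ∂ν - 1

noncomputable def spearmanRho (ν : Measure (ℝ × ℝ)) : ℝ :=
  12 * ∫ z, ν.real {q | q.1 ≤ z.1} * ν.real {q | q.2 ≤ z.2} ∂ν - 3

section PopulationCoefficients

variable {Ω : Type*} [MeasurableSpace Ω] {μ : Measure Ω} [IsFiniteMeasure μ] {Z₀ : Ω → ℝ × ℝ}

theorem kendallTau_map (hZ₀ : Measurable Z₀) :
    kendallTau (μ.map Z₀) = 4 * ∫ ω, μ.real {ω' | Z₀ ω' ≤ Z₀ ω} ∂μ - 1 := by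
  have hmeas : Measurable fun z => (μ.map Z₀).real (Set.Iic z) :=
    (measurable_measure_prodMk_left (measurableSet_le measurable_snd measurable_fst)).ennreal_toReal
  rw [kendallTau, integral_map hZ₀.aemeasurable hmeas.aestronglyMeasurable]
  refine congrArg (fun t => 4 * t - 1) (integral_congr_ae (ae_of_all _ fun ω => ?_))
  exact map_measureReal_apply hZ₀ measurableSet_Iic

theorem spearmanRho_map (hZ₀ : Measurable Z₀) :
    spearmanRho (μ.map Z₀) = 12 * ∫ ω, μ.real {ω' | (Z₀ ω').1 ≤ (Z₀ ω).1}
      * μ.real {ω' | (Z₀ ω').2 ≤ (Z₀ ω).2} ∂μ - 3 := by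
  have hmeas : Measurable fun z : ℝ × ℝ =>
      (μ.map Z₀).real {q | q.1 ≤ z.1} * (μ.map Z₀).real {q | q.2 ≤ z.2} :=
    (measurable_measure_prodMk_left
        (measurableSet_le measurable_snd.fst measurable_fst.fst)).ennreal_toReal.mul
      (measurable_measure_prodMk_left
        (measurableSet_le measurable_snd.snd measurable_fst.snd)).ennreal_toReal
  rw [spearmanRho, integral_map hZ₀.aemeasurable hmeas.aestronglyMeasurable]
  refine congrArg (fun t => 12 * t - 3) (integral_congr_ae (ae_of_all _ fun ω => ?_))
  exact congr_arg₂ (· * ·)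
    (map_measureReal_apply hZ₀ (measurableSet_le measurable_fst measurable_const))
    (map_measureReal_apply hZ₀ (measurableSet_le measurable_snd measurable_const))

end PopulationCoefficients

section SampleStatistics

variable {Ω : Type*} (X Y : ℕ → Ω → ℝ) (n : ℕ)

noncomputable def sampleKendallTau (ω : Ω) : ℝ :=
  2 / ((n : ℝ) * ((n : ℝ) - 1)) *
    ∑ j ∈ range n, ∑ i ∈ range j, Real.sign (X i ω - X j ω) * Real.sign (Y i ω - Y j ω)

noncomputable def sampleSpearmanRho (ω : Ω) : ℝ :=
  1 - 6 * (∑ i ∈ range n, ((#{j ∈ range n | X j ω ≤ X i ω} : ℝ)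
    - (#{j ∈ range n | Y j ω ≤ Y i ω} : ℝ)) ^ 2) / ((n : ℝ) ^ 3 - n)

/-- The `c i j` of the header: the contribution of observation `j` to `Rᵢ - Sᵢ`. -/
noncomputable def rankDiffTerm (i j : ℕ) : Ω → ℝ :=
  {ω | X j ω ≤ X i ω}.indicator 1 - {ω | Y j ω ≤ Y i ω}.indicator 1

theorem sampleSpearmanRho_eq (ω : Ω) :
    sampleSpearmanRho X Y n ω = 1 - 6 / ((n : ℝ) ^ 3 - n) *
      ∑ i ∈ range n, (∑ j ∈ (range n).erase i, rankDiffTerm X Y i j ω) ^ 2 := by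
  have hrank : ∀ i, ((#{j ∈ range n | X j ω ≤ X i ω} : ℝ) - #{j ∈ range n | Y j ω ≤ Y i ω})
      = ∑ j ∈ (range n).erase i, rankDiffTerm X Y i j ω := fun i => by
    rw [sum_erase _ (by simp [rankDiffTerm]), card_filter, card_filter]
    push_cast
    rw [← sum_sub_distrib]
    simp [rankDiffTerm, Set.indicator_apply]
  simp only [sampleSpearmanRho, hrank]
  ring

end SampleStatistics

section Sample

variable {Ω : Type*} [MeasurableSpace Ω] {μ : Measure Ω} {X Y : ℕ → Ω → ℝ}
  {ν : Measure (ℝ × ℝ)} (hX : ∀ i, Measurable (X i)) (hY : ∀ i, Measurable (Y i))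
include hX hY

variable [IsFiniteMeasure μ] in
theorem integrable_rankDiffTerm_mul (i j k : ℕ) :
    Integrable (fun ω => rankDiffTerm X Y i j ω * rankDiffTerm X Y i k ω) μ :=
  integrable_indicator_sub_mul_indicator_sub (measurableSet_le (hX j) (hX i))
    (measurableSet_le (hY j) (hY i)) (measurableSet_le (hX k) (hX i))
    (measurableSet_le (hY k) (hY i))

variable [IsFiniteMeasure μ] in
theorem integrable_sampleSpearmanRho (n : ℕ) : Integrable (sampleSpearmanRho X Y n) μ := by
  rw [funext (sampleSpearmanRho_eq X Y n)]
  exact (integrable_const 1).sub ((integrable_finsetSum _ fun i _ =>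
    integrable_sq_sum fun j _ k _ => integrable_rankDiffTerm_mul hX hY i j k).const_mul _)

variable (hlaw : ∀ i, μ.map (fun ω => (X i ω, Y i ω)) = ν)
include hlaw

theorem map_fst_eq (i : ℕ) : μ.map (X i) = ν.map Prod.fst := by
  rw [← hlaw i, Measure.map_map measurable_fst ((hX i).prodMk (hY i))]
  rfl

theorem map_snd_eq (i : ℕ) : μ.map (Y i) = ν.map Prod.snd := by
  rw [← hlaw i, Measure.map_map measurable_snd ((hX i).prodMk (hY i))]
  rfl

variable [IsProbabilityMeasure μ] [IsFiniteMeasure ν]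
  (hind : iIndepFun (fun i ω => (X i ω, Y i ω)) μ)
include hind

theorem measureReal_concordant {i j : ℕ} (hij : i ≠ j) :
    μ.real ({ω | X j ω ≤ X i ω} ∩ {ω | Y j ω ≤ Y i ω}) = ∫ z, ν.real (Set.Iic z) ∂ν := by
  have hS : MeasurableSet {p : (ℝ × ℝ) × (ℝ × ℝ) | p.2 ≤ p.1} :=
    measurableSet_le measurable_snd measurable_fst
  have h := map_measureReal_apply (μ := μ)
    (((hX i).prodMk (hY i)).prodMk ((hX j).prodMk (hY j))) hS
  rw [hind.map_pair_eq_prod (fun i => (hX i).prodMk (hY i)) hlaw hij,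
    Measure.measureReal_prod_apply hS] at h
  exact h.symm

theorem measureReal_discordant {i j k : ℕ} (hij : i ≠ j) (hik : i ≠ k) (hjk : j ≠ k) :
    μ.real ({ω | X j ω ≤ X i ω} ∩ {ω | Y k ω ≤ Y i ω})
      = ∫ z, ν.real {q | q.1 ≤ z.1} * ν.real {q | q.2 ≤ z.2} ∂ν := by
  have hS : MeasurableSet {p : (ℝ × ℝ) × (ℝ × ℝ) × (ℝ × ℝ) | p.2.1.1 ≤ p.1.1 ∧ p.2.2.2 ≤ p.1.2} :=
    (measurableSet_le measurable_snd.fst.fst measurable_fst.fst).inter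
      (measurableSet_le measurable_snd.snd.snd measurable_fst.snd)
  have hZ : ∀ i, Measurable fun ω => (X i ω, Y i ω) := fun i => (hX i).prodMk (hY i)
  have h := map_measureReal_apply (μ := μ) ((hZ i).prodMk ((hZ j).prodMk (hZ k))) hS
  rw [hind.map_triple_eq_prod hZ hlaw hij hik hjk, Measure.measureReal_prod_apply hS] at h
  refine h.symm.trans (integral_congr_ae (ae_of_all _ fun z => ?_))
  exact measureReal_prod_prod {q : ℝ × ℝ | q.1 ≤ z.1} {q : ℝ × ℝ | q.2 ≤ z.2}

variable (hac : ν ≪ volume)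
include hac

theorem measureReal_rank_le_eq_half {i j : ℕ} (hij : i ≠ j) :
    μ.real {ω | X j ω ≤ X i ω} = 1 / 2 ∧ μ.real {ω | Y j ω ≤ Y i ω} = 1 / 2 := by
  have := Measure.nullSingletonClass_map_fst (μa := volume) (μb := volume) hac
  have := Measure.nullSingletonClass_map_snd (μa := volume) (μb := volume) hac
  exact ⟨(hind.comp (fun _ => Prod.fst) fun _ => measurable_fst).measureReal_le_eq_half hX
      (map_fst_eq hX hY hlaw) hij,
    (hind.comp (fun _ => Prod.snd) fun _ => measurable_snd).measureReal_le_eq_half hY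
      (map_snd_eq hX hY hlaw) hij⟩

theorem measureReal_rank_le_and_le_eq_third {i j k : ℕ} (hij : i ≠ j) (hik : i ≠ k) (hjk : j ≠ k) :
    μ.real {ω | X j ω ≤ X i ω ∧ X k ω ≤ X i ω} = 1 / 3 ∧
      μ.real {ω | Y j ω ≤ Y i ω ∧ Y k ω ≤ Y i ω} = 1 / 3 := by
  have := Measure.nullSingletonClass_map_fst (μa := volume) (μb := volume) hac
  have := Measure.nullSingletonClass_map_snd (μa := volume) (μb := volume) hac
  exact ⟨(hind.comp (fun _ => Prod.fst) fun _ => measurable_fst).measureReal_le_and_le_eq_third hX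
      (map_fst_eq hX hY hlaw) hij hik hjk,
    (hind.comp (fun _ => Prod.snd) fun _ => measurable_snd).measureReal_le_and_le_eq_third hY
      (map_snd_eq hX hY hlaw) hij hik hjk⟩

theorem measure_tie_eq_zero {i j : ℕ} (hij : i ≠ j) :
    μ {ω | X i ω = X j ω} = 0 ∧ μ {ω | Y i ω = Y j ω} = 0 := by
  have := Measure.nullSingletonClass_map_fst (μa := volume) (μb := volume) hac
  have := Measure.nullSingletonClass_map_snd (μa := volume) (μb := volume) hac
  exact ⟨(hind.comp (fun _ => Prod.fst) fun _ => measurable_fst).measure_eq_eq_zero hX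
      (map_fst_eq hX hY hlaw) hij,
    (hind.comp (fun _ => Prod.snd) fun _ => measurable_snd).measure_eq_eq_zero hY
      (map_snd_eq hX hY hlaw) hij⟩

theorem integral_rankDiffTerm_mul_self {i j : ℕ} (hij : i ≠ j) :
    ∫ ω, rankDiffTerm X Y i j ω * rankDiffTerm X Y i j ω ∂μ = (1 - kendallTau ν) / 2 := by
  obtain ⟨hx, hy⟩ := measureReal_rank_le_eq_half hX hY hlaw hind hac hij
  have hA := measurableSet_le (hX j) (hX i)
  have hB := measurableSet_le (hY j) (hY i)
  refine (integral_indicator_sub_mul_indicator_sub hA hB hA hB).trans ?_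
  rw [Set.inter_self, Set.inter_self, Set.inter_comm {ω | Y j ω ≤ Y i ω},
    measureReal_concordant hX hY hlaw hind hij, hx, hy, kendallTau]
  ring

theorem integral_rankDiffTerm_mul {i j k : ℕ} (hij : i ≠ j) (hik : i ≠ k) (hjk : j ≠ k) :
    ∫ ω, rankDiffTerm X Y i j ω * rankDiffTerm X Y i k ω ∂μ = (1 - spearmanRho ν) / 6 := by
  obtain ⟨hx, hy⟩ := measureReal_rank_le_and_le_eq_third hX hY hlaw hind hac hij hik hjk
  rw [Set.ofPred_and] at hx hy
  refine (integral_indicator_sub_mul_indicator_sub (measurableSet_le (hX j) (hX i))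
    (measurableSet_le (hY j) (hY i)) (measurableSet_le (hX k) (hX i))
    (measurableSet_le (hY k) (hY i))).trans ?_
  rw [hx, hy, measureReal_discordant hX hY hlaw hind hij hik hjk, Set.inter_comm,
    measureReal_discordant hX hY hlaw hind hik hij hjk.symm, spearmanRho]
  ring

theorem sign_mul_sign_ae_eq {i j : ℕ} (hij : i ≠ j) :
    (fun ω => Real.sign (X i ω - X j ω) * Real.sign (Y i ω - Y j ω))
      =ᵐ[μ] fun ω => 1 - 2 * (rankDiffTerm X Y i j ω * rankDiffTerm X Y i j ω) := by
  obtain ⟨hx, hy⟩ := measure_tie_eq_zero hX hY hlaw hind hac hij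
  filter_upwards [measure_eq_zero_iff_ae_notMem.1 hx, measure_eq_zero_iff_ae_notMem.1 hy]
    with ω hxω hyω
  rw [Real.sign_sub_mul_sign_sub hxω hyω]
  simp [rankDiffTerm, Set.indicator_apply, sq]

theorem integrable_sign_mul_sign {i j : ℕ} (hij : i ≠ j) :
    Integrable (fun ω => Real.sign (X i ω - X j ω) * Real.sign (Y i ω - Y j ω)) μ :=
  ((integrable_const 1).sub ((integrable_rankDiffTerm_mul hX hY i j j).const_mul 2)).congr
    (sign_mul_sign_ae_eq hX hY hlaw hind hac hij).symm

theorem integral_sign_mul_sign {i j : ℕ} (hij : i ≠ j) :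
    ∫ ω, Real.sign (X i ω - X j ω) * Real.sign (Y i ω - Y j ω) ∂μ = kendallTau ν := by
  rw [integral_congr_ae (sign_mul_sign_ae_eq hX hY hlaw hind hac hij), integral_sub
    (integrable_const 1) ((integrable_rankDiffTerm_mul hX hY i j j).const_mul 2),
    integral_const_mul, integral_rankDiffTerm_mul_self hX hY hlaw hind hac hij]
  simp
  ring

theorem integrable_sampleKendallTau (n : ℕ) : Integrable (sampleKendallTau X Y n) μ :=
  (integrable_finsetSum _ fun _ _ => integrable_finsetSum _ fun _ hi =>
    integrable_sign_mul_sign hX hY hlaw hind hac (mem_range.1 hi).ne).const_mul _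

theorem integral_sampleKendallTau {n : ℕ} (hn : 2 ≤ n) :
    ∫ ω, sampleKendallTau X Y n ω ∂μ = kendallTau ν := by
  have hrow : ∀ j ∈ range n, ∫ ω, ∑ i ∈ range j,
      Real.sign (X i ω - X j ω) * Real.sign (Y i ω - Y j ω) ∂μ = j * kendallTau ν :=
    fun j _ => by
      rw [integral_finsetSum _ fun i hi =>
          integrable_sign_mul_sign hX hY hlaw hind hac (mem_range.1 hi).ne,
        sum_congr rfl fun i hi => integral_sign_mul_sign hX hY hlaw hind hac (mem_range.1 hi).ne,
        sum_const, card_range, nsmul_eq_mul]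
  have hgauss : ∑ j ∈ range n, (j : ℝ) = n * (n - 1) / 2 := by
    have := congrArg (Nat.cast : ℕ → ℝ) (sum_range_id_mul_two n)
    push_cast [Nat.cast_sub (by omega : 1 ≤ n)] at this
    linarith
  have hn2 : (2 : ℝ) ≤ n := by exact_mod_cast hn
  have hn0 : (n : ℝ) ≠ 0 := by positivity
  have hn1 : (n : ℝ) - 1 ≠ 0 := by linarith
  simp only [sampleKendallTau]
  rw [integral_const_mul, integral_finsetSum _ fun j _ => integrable_finsetSum _ fun i hi =>
      integrable_sign_mul_sign hX hY hlaw hind hac (mem_range.1 hi).ne,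
    sum_congr rfl hrow, ← sum_mul, hgauss]
  field_simp

theorem integral_sampleSpearmanRho {n : ℕ} (hn : 2 ≤ n) :
    ∫ ω, sampleSpearmanRho X Y n ω ∂μ
      = (3 * kendallTau ν + (n - 2) * spearmanRho ν) / (n + 1) := by
  have hrow : ∀ i ∈ range n, ∫ ω, (∑ j ∈ (range n).erase i, rankDiffTerm X Y i j ω) ^ 2 ∂μ
      = (n - 1) * ((1 - kendallTau ν) / 2 + (n - 2) * ((1 - spearmanRho ν) / 6)) := fun i hi => by
    rw [integral_sq_sum_eq (fun j _ k _ => integrable_rankDiffTerm_mul hX hY i j k)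
      (fun j hj => integral_rankDiffTerm_mul_self hX hY hlaw hind hac (ne_of_mem_erase hj).symm)
      (fun j hj k hk hjk => integral_rankDiffTerm_mul hX hY hlaw hind hac
        (ne_of_mem_erase hj).symm (ne_of_mem_erase hk).symm hjk),
      card_erase_of_mem hi, card_range, Nat.cast_pred (by omega)]
    ring
  have hn2 : (2 : ℝ) ≤ n := by exact_mod_cast hn
  have hn0 : (n : ℝ) ≠ 0 := by positivity
  have hn1 : (n : ℝ) - 1 ≠ 0 := by linarith
  have hn3 : (n : ℝ) + 1 ≠ 0 := by positivity
  simp_rw [sampleSpearmanRho_eq]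
  rw [integral_sub (integrable_const 1) ((integrable_finsetSum _ fun i _ =>
      integrable_sq_sum fun j _ k _ => integrable_rankDiffTerm_mul hX hY i j k).const_mul _),
    integral_const, integral_const_mul, integral_finsetSum _ fun i _ =>
      integrable_sq_sum fun j _ k _ => integrable_rankDiffTerm_mul hX hY i j k,
    sum_congr rfl hrow, sum_const, card_range, nsmul_eq_mul, probReal_univ, one_smul,
    show (n : ℝ) ^ 3 - n = n * (n - 1) * (n + 1) by ring]
  field_simp
  ring

end Sample

end RankCorrelation

open RankCorrelation

theorem expectation_rn_and_asymptotic_unbiasedness_general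
    {Ω : Type*} [MeasurableSpace Ω] {μ : Measure Ω} [IsProbabilityMeasure μ]
    (X Y : ℕ → Ω → ℝ) (X₀ Y₀ : Ω → ℝ)
    (hX : ∀ i, Measurable (X i)) (hY : ∀ i, Measurable (Y i))
    (hX₀ : Measurable X₀) (hY₀ : Measurable Y₀)
    (F : ℝ → ℝ → ℝ) (H G : ℝ → ℝ)
    (hF : ∀ x y, F x y = (μ {ω | X₀ ω ≤ x ∧ Y₀ ω ≤ y}).toReal)
    (hH : ∀ x, H x = (μ {ω | X₀ ω ≤ x}).toReal)
    (hG : ∀ y, G y = (μ {ω | Y₀ ω ≤ y}).toReal)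
    (habs : Measure.map (fun ω => (X₀ ω, Y₀ ω)) μ ≪ (volume : Measure (ℝ × ℝ)))
    (hident : ∀ i, Measure.map (fun ω => (X i ω, Y i ω)) μ
      = Measure.map (fun ω => (X₀ ω, Y₀ ω)) μ)
    (hindep : iIndepFun
      (fun i ω => (X i ω, Y i ω)) μ)
    (τ ρS : ℝ)
    (hτ : τ = 4 * ∫ ω, F (X₀ ω) (Y₀ ω) ∂μ - 1)
    (hρS : ρS = 12 * ∫ ω, H (X₀ ω) * G (Y₀ ω) ∂μ - 3)
    (τseq ρseq rseq : ℕ → Ω → ℝ)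
    (hτseq : ∀ n ω, τseq n ω = 2 / ((n : ℝ) * ((n : ℝ) - 1)) *
      ∑ j ∈ range n, ∑ i ∈ range j,
        Real.sign (X i ω - X j ω) * Real.sign (Y i ω - Y j ω))
    (hρseq : ∀ n ω, ρseq n ω = 1 - 6 * (∑ i ∈ range n,
        ((((range n).filter (fun j => X j ω ≤ X i ω)).card : ℝ)
          - (((range n).filter (fun j => Y j ω ≤ Y i ω)).card : ℝ)) ^ 2)
        / ((n : ℝ) ^ 3 - n))
    (hrseq : ∀ n ω, rseq n ω = 1.5 * τseq n ω - 0.5 * ρseq n ω) :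
    (∀ n, 2 ≤ n → ∫ ω, rseq n ω ∂μ
        = (3 * (n : ℝ) * τ - ((n : ℝ) - 2) * ρS) / (2 * ((n : ℝ) + 1))) ∧
      Tendsto (fun n => ∫ ω, rseq n ω ∂μ) atTop (nhds ((3 * τ - ρS) / 2)) := by
  have hZ₀ : Measurable fun ω => (X₀ ω, Y₀ ω) := hX₀.prodMk hY₀
  have hτν : τ = kendallTau (μ.map fun ω => (X₀ ω, Y₀ ω)) := by
    simp only [hτ, hF, kendallTau_map hZ₀]
    rfl
  have hρν : ρS = spearmanRho (μ.map fun ω => (X₀ ω, Y₀ ω)) := by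
    simp only [hρS, hH, hG, spearmanRho_map hZ₀]
    rfl
  have := Measure.isProbabilityMeasure_map (μ := μ) hZ₀.aemeasurable
  have hmean : ∀ n, 2 ≤ n → ∫ ω, rseq n ω ∂μ
      = (3 * (n : ℝ) * τ - ((n : ℝ) - 2) * ρS) / (2 * ((n : ℝ) + 1)) := fun n hn => by
    have hr : rseq n = fun ω => 1.5 * sampleKendallTau X Y n ω - 0.5 * sampleSpearmanRho X Y n ω :=
      funext fun ω => by rw [hrseq, hτseq, hρseq]; rfl
    have hn1 : (n : ℝ) + 1 ≠ 0 := by positivity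
    rw [hr, integral_sub ((integrable_sampleKendallTau hX hY hident hindep habs n).const_mul _)
      ((integrable_sampleSpearmanRho hX hY n).const_mul _), integral_const_mul, integral_const_mul,
      integral_sampleKendallTau hX hY hident hindep habs hn,
      integral_sampleSpearmanRho hX hY hident hindep habs hn, ← hτν, ← hρν]
    field_simp
    ring
  refine ⟨hmean, (tendsto_add_mul_div_add_mul_atTop_nhds (2 * ρS) 2 (3 * τ - ρS)
    two_ne_zero).congr' ?_⟩
  filter_upwards [eventually_ge_atTop 2] with n hn
  rw [hmean n hn]
  ring

/-- For i.i.d. random vectors `(Xᵢ,Yᵢ)` with absolutely continuous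
joint distribution, joint CDF `F` and marginals `H`, `G`, the coefficient
`rₙ = 1.5·τₙ − 0.5·ρ_{n,S}` (with `τₙ` the sample Kendall and `ρ_{n,S}` the sample
Spearman correlation coefficient) satisfies, for every `n ≥ 2`,
`E[rₙ] = (3nτ − (n−2)ρ_S)/(2(n+1))`; in particular `rₙ` is a biased but
asymptotically unbiased estimator of `r = (3τ − ρ_S)/2`, i.e. `E[rₙ] → r`. -/
theorem expectation_rn_and_asymptotic_unbiasedness
    {Ω : Type*} [MeasurableSpace Ω] {μ : Measure Ω} [IsProbabilityMeasure μ]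
    (X Y : ℕ → Ω → ℝ) (X₀ Y₀ : Ω → ℝ)
    (hX : ∀ i, Measurable (X i)) (hY : ∀ i, Measurable (Y i))
    (hX₀ : Measurable X₀) (hY₀ : Measurable Y₀)
    (F : ℝ → ℝ → ℝ) (H G : ℝ → ℝ)
    (hF : ∀ x y, F x y = (μ {ω | X₀ ω ≤ x ∧ Y₀ ω ≤ y}).toReal)
    (hH : ∀ x, H x = (μ {ω | X₀ ω ≤ x}).toReal)
    (hG : ∀ y, G y = (μ {ω | Y₀ ω ≤ y}).toReal)
    (habs : Measure.map (fun ω => (X₀ ω, Y₀ ω)) μ ≪ (volume : Measure (ℝ × ℝ)))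
    (hident : ∀ i, Measure.map (fun ω => (X i ω, Y i ω)) μ
      = Measure.map (fun ω => (X₀ ω, Y₀ ω)) μ)
    (hindep : iIndepFun
      (fun i ω => (X i ω, Y i ω)) μ)
    (hFint : Integrable (fun ω => F (X₀ ω) (Y₀ ω)) μ)
    (hHGint : Integrable (fun ω => H (X₀ ω) * G (Y₀ ω)) μ)
    (τ ρS : ℝ)
    (hτ : τ = 4 * ∫ ω, F (X₀ ω) (Y₀ ω) ∂μ - 1)
    (hρS : ρS = 12 * ∫ ω, H (X₀ ω) * G (Y₀ ω) ∂μ - 3)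
    (τseq ρseq rseq : ℕ → Ω → ℝ)
    (hτseq : ∀ n ω, τseq n ω = 2 / ((n : ℝ) * ((n : ℝ) - 1)) *
      ∑ j ∈ range n, ∑ i ∈ range j,
        Real.sign (X i ω - X j ω) * Real.sign (Y i ω - Y j ω))
    (hρseq : ∀ n ω, ρseq n ω = 1 - 6 * (∑ i ∈ range n,
        ((((range n).filter (fun j => X j ω ≤ X i ω)).card : ℝ)
          - (((range n).filter (fun j => Y j ω ≤ Y i ω)).card : ℝ)) ^ 2)
        / ((n : ℝ) ^ 3 - n))
    (hrseq : ∀ n ω, rseq n ω = 1.5 * τseq n ω - 0.5 * ρseq n ω) :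
    (∀ n, 2 ≤ n → ∫ ω, rseq n ω ∂μ
        = (3 * (n : ℝ) * τ - ((n : ℝ) - 2) * ρS) / (2 * ((n : ℝ) + 1))) ∧
      Tendsto (fun n => ∫ ω, rseq n ω ∂μ) atTop (nhds ((3 * τ - ρS) / 2)) :=
  expectation_rn_and_asymptotic_unbiasedness_general X Y X₀ Y₀ hX hY hX₀ hY₀ F H G hF hH hG habs
    hident hindep τ ρS hτ hρS τseq ρseq rseq hτseq hρseq hrseq
end

section
/- X and Y are independent if and only if Var(D(X,Y)) = 0, where D(x,y) = 6·(F(x,y) − H(x)·G(y)). -/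
/-!
By the π-system argument on quadrants, `X` and `Y` are independent iff the joint CDF factors,
i.e. iff `D ≡ 0`; this gives one direction at once. Conversely, `Var D(X,Y) = 0` makes
`D(X,Y)` almost surely equal to its mean `m`. The law of `(X,Y)` is equivalent to Lebesgue
measure (its density is positive), so `D = m` Lebesgue-almost everywhere. That law also gives
no mass to horizontal and vertical lines, so `F`, `H`, `G`, hence `D`, are continuous, and
therefore `D ≡ m` everywhere. Finally `|D(x,y)| ≤ 6 H(x) → 0` as `x → -∞`, so `m = 0`.
-/

open MeasureTheory ProbabilityTheory Set Filter Topology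

lemma eventually_le_iff_le_nhds_of_ne {α : Type*} [TopologicalSpace α] [LinearOrder α]
    [OrderTopology α] {t a : α} (h : t ≠ a) : ∀ᶠ x in 𝓝 a, t ≤ x ↔ t ≤ a := by
  rcases h.lt_or_gt with h | h
  · filter_upwards [eventually_gt_nhds h] with x hx using iff_of_true hx.le h.le
  · filter_upwards [eventually_lt_nhds h] with x hx using iff_of_false hx.not_ge h.not_ge

section

variable {Ω : Type*} [MeasurableSpace Ω] {μ : Measure Ω}

lemma continuous_measureReal_of_ae_eventually_mem_iff {ι : Type*} [TopologicalSpace ι]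
    [FirstCountableTopology ι] [IsFiniteMeasure μ] {s : ι → Set Ω}
    (hs : ∀ i, MeasurableSet (s i))
    (h : ∀ i, ∀ᵐ ω ∂μ, ∀ᶠ j in 𝓝 i, ω ∈ s j ↔ ω ∈ s i) :
    Continuous fun i => μ.real (s i) :=
  continuous_iff_continuousAt.2 fun i => (ENNReal.tendsto_toReal (measure_ne_top μ _)).comp
    (tendsto_measure_of_ae_tendsto_indicator_of_isFiniteMeasure _ (hs i) hs (h i))

lemma abs_measureReal_inter_sub_mul_le [IsProbabilityMeasure μ] (s t : Set Ω) :
    |μ.real (s ∩ t) - μ.real s * μ.real t| ≤ μ.real s := by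
  have hst₀ : 0 ≤ μ.real (s ∩ t) := measureReal_nonneg
  have hst : μ.real (s ∩ t) ≤ μ.real s := measureReal_mono inter_subset_left
  have hs₀ : 0 ≤ μ.real s := measureReal_nonneg
  have ht₀ : 0 ≤ μ.real t := measureReal_nonneg
  have ht : μ.real t ≤ 1 := measureReal_le_one
  rw [abs_le]
  constructor <;> nlinarith

lemma forall_eq_const_of_ae_comp_eq {α β : Type*} [TopologicalSpace α] [MeasurableSpace α]
    [OpensMeasurableSpace α] [TopologicalSpace β] [T2Space β] {ρ : Measure α}
    [ρ.IsOpenPosMeasure] {Z : Ω → α} (hZ : AEMeasurable Z μ) (hρ : ρ ≪ μ.map Z) {g : α → β}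
    (hg : Continuous g) {c : β} (h : ∀ᵐ ω ∂μ, g (Z ω) = c) : ∀ p, g p = c := by
  have hmap : ∀ᵐ p ∂μ.map Z, g p = c :=
    (ae_map_iff hZ (isClosed_eq hg continuous_const).measurableSet).2 h
  exact congrFun ((hg.ae_eq_iff_eq ρ continuous_const).1 (hρ.ae_le hmap))

lemma indepFun_iff_measureReal_preimage_Iic_inter_eq_mul {α : Type*} [TopologicalSpace α]
    [LinearOrder α] [OrderTopology α] [SecondCountableTopology α] [MeasurableSpace α]
    [BorelSpace α] [IsProbabilityMeasure μ] {X Y : Ω → α} (hX : Measurable X)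
    (hY : Measurable Y) :
    IndepFun X Y μ ↔ ∀ a b, μ.real (X ⁻¹' Iic a ∩ Y ⁻¹' Iic b)
      = μ.real (X ⁻¹' Iic a) * μ.real (Y ⁻¹' Iic b) := by
  have hreal : ∀ s t : Set Ω, μ.real (s ∩ t) = μ.real s * μ.real t ↔ μ (s ∩ t) = μ s * μ t :=
    fun s t => by
      rw [measureReal_def, measureReal_def, measureReal_def, ← ENNReal.toReal_mul]
      exact ENNReal.toReal_eq_toReal_iff' (by finiteness) (by finiteness)
  simp only [hreal]
  refine ⟨fun h a b => h.measure_inter_preimage_eq_mul _ _ measurableSet_Iic measurableSet_Iic,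
    fun h => ?_⟩
  have hgen : ∀ Z : Ω → α, MeasurableSpace.comap Z ‹_›
      = MeasurableSpace.generateFrom {s | ∃ t ∈ range Iic, Z ⁻¹' t = s} := fun Z => by
    rw [BorelSpace.measurable_eq (α := α), borel_eq_generateFrom_Iic,
      MeasurableSpace.comap_generateFrom]
    rfl
  refine (IndepFun_iff_Indep X Y μ).2 <| IndepSets.indep hX.comap_le hY.comap_le
    (isPiSystem_Iic.comap X) (isPiSystem_Iic.comap Y) (hgen X) (hgen Y) ?_
  rw [IndepSets_iff]
  rintro _ _ ⟨_, ⟨a, rfl⟩, rfl⟩ ⟨_, ⟨b, rfl⟩, rfl⟩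
  exact h a b

lemma measure_preimage_singleton_fst_eq_zero {α β : Type*} [MeasureSpace α] [MeasureSpace β]
    [MeasurableSingletonClass α] [NullSingletonClass (volume : Measure α)]
    [SFinite (volume : Measure β)]
    {X : Ω → α} {Y : Ω → β} (hXY : Measurable fun ω => (X ω, Y ω))
    (hac : μ.map (fun ω => (X ω, Y ω)) ≪ volume) (a : α) : μ (X ⁻¹' {a}) = 0 := by
  have : volume ({a} ×ˢ univ : Set (α × β)) = 0 := by
    rw [Measure.volume_eq_prod, Measure.prod_prod, measure_singleton, zero_mul]
  simpa [Measure.map_apply hXY ((measurableSet_singleton a).prod MeasurableSet.univ),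
    mk_preimage_prod] using hac this

lemma measure_preimage_singleton_snd_eq_zero {α β : Type*} [MeasureSpace α] [MeasureSpace β]
    [MeasurableSingletonClass β] [NullSingletonClass (volume : Measure β)]
    [SFinite (volume : Measure β)]
    {X : Ω → α} {Y : Ω → β} (hXY : Measurable fun ω => (X ω, Y ω))
    (hac : μ.map (fun ω => (X ω, Y ω)) ≪ volume) (b : β) : μ (Y ⁻¹' {b}) = 0 := by
  have : volume (univ ×ˢ {b} : Set (α × β)) = 0 := by
    rw [Measure.volume_eq_prod, Measure.prod_prod, measure_singleton, mul_zero]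
  simpa [Measure.map_apply hXY (MeasurableSet.univ.prod (measurableSet_singleton b)),
    mk_preimage_prod] using hac this

variable {X Y : Ω → ℝ}

lemma continuous_measureReal_preimage_Iic [IsFiniteMeasure μ] (hX : Measurable X)
    (hXa : ∀ a, μ (X ⁻¹' {a}) = 0) : Continuous fun x => μ.real (X ⁻¹' Iic x) := by
  refine continuous_measureReal_of_ae_eventually_mem_iff (fun x => hX measurableSet_Iic)
    fun x => ?_
  filter_upwards [measure_eq_zero_iff_ae_notMem.1 (hXa x)] with ω hω
  exact eventually_le_iff_le_nhds_of_ne hω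

lemma continuous_measureReal_preimage_Iic_inter_preimage_Iic [IsFiniteMeasure μ]
    (hX : Measurable X) (hY : Measurable Y) (hXa : ∀ a, μ (X ⁻¹' {a}) = 0)
    (hYa : ∀ b, μ (Y ⁻¹' {b}) = 0) :
    Continuous fun p : ℝ × ℝ => μ.real (X ⁻¹' Iic p.1 ∩ Y ⁻¹' Iic p.2) := by
  refine continuous_measureReal_of_ae_eventually_mem_iff
    (fun p => (hX measurableSet_Iic).inter (hY measurableSet_Iic)) fun p => ?_
  filter_upwards [measure_eq_zero_iff_ae_notMem.1 (hXa p.1),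
    measure_eq_zero_iff_ae_notMem.1 (hYa p.2)] with ω hωX hωY
  filter_upwards [continuous_fst.continuousAt.eventually (eventually_le_iff_le_nhds_of_ne hωX),
    continuous_snd.continuousAt.eventually (eventually_le_iff_le_nhds_of_ne hωY)] with q hq1 hq2
  simp only [mem_inter_iff, mem_preimage, mem_Iic, hq1, hq2]

lemma tendsto_measureReal_preimage_Iic_atBot [IsProbabilityMeasure μ] (hX : Measurable X) :
    Tendsto (fun x => μ.real (X ⁻¹' Iic x)) atBot (𝓝 0) := by
  have := Measure.isProbabilityMeasure_map (μ := μ) hX.aemeasurable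
  refine (tendsto_cdf_atBot (μ.map X)).congr fun x => ?_
  rw [cdf_eq_real, map_measureReal_apply hX measurableSet_Iic]

noncomputable def dependenceFunction (μ : Measure Ω) (X Y : Ω → ℝ) (x y : ℝ) : ℝ :=
  6 * (μ.real (X ⁻¹' Iic x ∩ Y ⁻¹' Iic y) - μ.real (X ⁻¹' Iic x) * μ.real (Y ⁻¹' Iic y))

lemma abs_dependenceFunction_le [IsProbabilityMeasure μ] (x y : ℝ) :
    |dependenceFunction μ X Y x y| ≤ 6 * μ.real (X ⁻¹' Iic x) := by
  rw [dependenceFunction, abs_mul, abs_of_pos (by norm_num : (0 : ℝ) < 6)]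
  gcongr
  exact abs_measureReal_inter_sub_mul_le _ _

lemma tendsto_dependenceFunction_atBot [IsProbabilityMeasure μ] (hX : Measurable X) (y : ℝ) :
    Tendsto (fun x => dependenceFunction μ X Y x y) atBot (𝓝 0) :=
  squeeze_zero_norm (fun x => abs_dependenceFunction_le x y)
    (by simpa using (tendsto_measureReal_preimage_Iic_atBot hX).const_mul 6)

lemma continuous_dependenceFunction [IsFiniteMeasure μ] (hX : Measurable X) (hY : Measurable Y)
    (hXa : ∀ a, μ (X ⁻¹' {a}) = 0) (hYa : ∀ b, μ (Y ⁻¹' {b}) = 0) :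
    Continuous fun p : ℝ × ℝ => dependenceFunction μ X Y p.1 p.2 :=
  continuous_const.mul <|
    (continuous_measureReal_preimage_Iic_inter_preimage_Iic hX hY hXa hYa).sub <|
      ((continuous_measureReal_preimage_Iic hX hXa).comp continuous_fst).mul
        ((continuous_measureReal_preimage_Iic hY hYa).comp continuous_snd)

lemma indepFun_iff_dependenceFunction_eq_zero [IsProbabilityMeasure μ] (hX : Measurable X)
    (hY : Measurable Y) : IndepFun X Y μ ↔ ∀ x y, dependenceFunction μ X Y x y = 0 := by
  simp only [indepFun_iff_measureReal_preimage_Iic_inter_eq_mul hX hY, dependenceFunction,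
    mul_eq_zero, OfNat.ofNat_ne_zero, false_or, sub_eq_zero]

lemma variance_dependenceFunction_eq_zero_iff [IsProbabilityMeasure μ] (hX : Measurable X)
    (hY : Measurable Y) (hac : μ.map (fun ω => (X ω, Y ω)) ≪ volume)
    (hca : volume ≪ μ.map (fun ω => (X ω, Y ω))) :
    Var[fun ω => dependenceFunction μ X Y (X ω) (Y ω); μ] = 0 ↔
      ∀ x y, dependenceFunction μ X Y x y = 0 := by
  refine ⟨fun hvar x y => ?_, fun h => by simp only [h]; exact variance_zero μ⟩
  have hXY : Measurable fun ω => (X ω, Y ω) := hX.prodMk hY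
  have hc := continuous_dependenceFunction hX hY
    (measure_preimage_singleton_fst_eq_zero hXY hac)
    (measure_preimage_singleton_snd_eq_zero hXY hac)
  have hmem : MemLp (fun ω => dependenceFunction μ X Y (X ω) (Y ω)) 2 μ :=
    .of_bound (hc.measurable.comp hXY).aestronglyMeasurable 6 <| ae_of_all _ fun ω =>
      (abs_dependenceFunction_le _ _).trans
        (mul_le_of_le_one_right (by norm_num) measureReal_le_one)
  have hconst := forall_eq_const_of_ae_comp_eq hXY.aemeasurable hca hc
    (ae_eq_integral_of_variance_eq_zero hmem hvar)
  have hmean : μ[fun ω => dependenceFunction μ X Y (X ω) (Y ω)] = 0 :=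
    tendsto_nhds_unique (tendsto_const_nhds.congr fun x => (hconst (x, 0)).symm)
      (tendsto_dependenceFunction_atBot hX 0)
  exact (hconst (x, y)).trans hmean

end

/-- Let `(X,Y)` have a continuous, everywhere strictly positive joint
density `f` on `ℝ²`, joint CDF `F` and marginal CDFs `H`, `G`, and let
`D(x,y) = 6·(F(x,y) − H(x)·G(y))` be the dependence function. Then `X` and `Y` are
independent if and only if `Var(D(X,Y)) = 0`. -/
theorem indepFun_iff_variance_dependence_function_eq_zero
    {Ω : Type*} [MeasurableSpace Ω] {μ : Measure Ω} [IsProbabilityMeasure μ]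
    (X Y : Ω → ℝ) (hX : Measurable X) (hY : Measurable Y)
    (f : ℝ × ℝ → ℝ) (hfc : Continuous f) (hfpos : ∀ p, 0 < f p)
    (hlaw : Measure.map (fun ω => (X ω, Y ω)) μ
      = (volume : Measure (ℝ × ℝ)).withDensity (fun p => ENNReal.ofReal (f p)))
    (F : ℝ → ℝ → ℝ) (H G : ℝ → ℝ)
    (hF : ∀ x y, F x y = (μ {ω | X ω ≤ x ∧ Y ω ≤ y}).toReal)
    (hH : ∀ x, H x = (μ {ω | X ω ≤ x}).toReal)
    (hG : ∀ y, G y = (μ {ω | Y ω ≤ y}).toReal)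
    (D : ℝ → ℝ → ℝ)
    (hD : ∀ x y, D x y = 6 * (F x y - H x * G y)) :
    IndepFun X Y μ ↔ variance (fun ω => D (X ω) (Y ω)) μ = 0 := by
  obtain rfl : D = dependenceFunction μ X Y := by
    ext x y
    rw [hD, hF, hH, hG]
    rfl
  have hac : μ.map (fun ω => (X ω, Y ω)) ≪ volume :=
    hlaw ▸ withDensity_absolutelyContinuous _ _
  have hca : volume ≪ μ.map (fun ω => (X ω, Y ω)) :=
    hlaw ▸ withDensity_absolutelyContinuous' hfc.measurable.ennreal_ofReal.aemeasurable
      (ae_of_all _ fun p => (ENNReal.ofReal_pos.2 (hfpos p)).ne')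
  rw [indepFun_iff_dependenceFunction_eq_zero hX hY,
    variance_dependenceFunction_eq_zero_iff hX hY hac hca]
end

section
/- For every t > 0, Spearman's rho of the distribution F_t equals 12·ln 2 − 9; that is, 12·∫_{0}^{∞}∫_{0}^{∞} (1 − e^{−x})·(1 − (1+y)^{−t})·f_t(x,y) dx dy − 3 = 12·ln 2 − 9. In particular ρ_S is free of the parameter t. -/
open MeasureTheory Real Filter Set Topology

/-!
Integrate out `x` first. With `s = (1 + y) ^ t` the density is `t (1 + y) ^ (t - 1) · x e^{-s x}`,
and `∫₀^∞ (1 - e^{-x}) x e^{-s x} dx = s⁻² - (s + 1)⁻²`. The factor `t (1 + y) ^ (t - 1)` is exactly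
the Jacobian of `y ↦ s`, so the remaining integral becomes
`∫₁^∞ (1 - s⁻¹) (s⁻² - (s + 1)⁻²) ds = log 2 - 1/2`, in which `t` no longer appears.
-/

section
variable {α β : Type*} [MeasurableSpace α] [MeasurableSpace β] {μ : Measure α} {ν : Measure β}
  [SFinite μ] [SFinite ν]

theorem integral_prod_symm_of_nonneg {f : α × β → ℝ} (hf : AEStronglyMeasurable f (μ.prod ν))
    (hf₀ : ∀ᵐ y ∂ν, 0 ≤ᵐ[μ] fun x => f (x, y))
    (hslice : ∀ᵐ y ∂ν, Integrable (fun x => f (x, y)) μ)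
    (hint : Integrable (fun y => ∫ x, f (x, y) ∂μ) ν) :
    ∫ z, f z ∂μ.prod ν = ∫ y, ∫ x, f (x, y) ∂μ ∂ν := by
  refine integral_prod_symm f ((integrable_prod_iff' hf).2 ⟨hslice, hint.congr ?_⟩)
  filter_upwards [hf₀] with y hy
  exact integral_congr_ae (hy.mono fun x hx => (Real.norm_of_nonneg hx).symm)
end

theorem integral_mul_exp_neg_mul_Ioi {c : ℝ} (hc : 0 < c) :
    ∫ x in Ioi (0 : ℝ), x * exp (-(c * x)) = c⁻¹ ^ 2 := by
  simpa [Gamma_two, show (2 : ℝ) - 1 = 1 by norm_num] using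
    integral_rpow_mul_exp_neg_mul_Ioi two_pos hc

theorem integrableOn_mul_exp_neg_mul_Ioi {c : ℝ} (hc : 0 < c) :
    IntegrableOn (fun x => x * exp (-(c * x))) (Ioi 0) :=
  Integrable.of_integral_ne_zero (by rw [integral_mul_exp_neg_mul_Ioi hc]; positivity)

theorem integral_one_sub_exp_neg_mul_mul_exp_neg_mul_Ioi {s : ℝ} (hs : 0 < s) :
    ∫ x in Ioi (0 : ℝ), (1 - exp (-x)) * (x * exp (-(s * x))) = s⁻¹ ^ 2 - (s + 1)⁻¹ ^ 2 := by
  have hs₁ : 0 < s + 1 := by linarith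
  have h (x : ℝ) : (1 - exp (-x)) * (x * exp (-(s * x))) =
      x * exp (-(s * x)) - x * exp (-((s + 1) * x)) := by
    rw [show -((s + 1) * x) = -(s * x) + -x by ring, exp_add]; ring
  simp_rw [h]
  rw [integral_sub (integrableOn_mul_exp_neg_mul_Ioi hs) (integrableOn_mul_exp_neg_mul_Ioi hs₁),
    integral_mul_exp_neg_mul_Ioi hs, integral_mul_exp_neg_mul_Ioi hs₁]

/-- The `y`-integrand after integrating out `x` and substituting `s = (1 + y) ^ t`;
the factor `1 - s⁻¹` is the Pareto marginal `G_t(y)`. -/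
noncomputable def rhoKernel (s : ℝ) : ℝ := (1 - s⁻¹) * (s⁻¹ ^ 2 - (s + 1)⁻¹ ^ 2)

/-- The `y`-integrand after integrating out `x` and substituting `s = (1 + y) ^ t`;
the factor `1 - s⁻¹` is the Pareto marginal `G_t(y)`. -/
noncomputable def rhoKernelPrimitive (s : ℝ) : ℝ :=
  -s⁻¹ + 2 * (s + 1)⁻¹ + s⁻¹ ^ 2 / 2 + log (1 - (s + 1)⁻¹)

theorem rhoKernel_pos {s : ℝ} (hs : 1 < s) : 0 < rhoKernel s := by
  have hs₀ : 0 < s := by linarith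
  have h₁ : s⁻¹ < 1 := inv_lt_one_of_one_lt₀ hs
  have h₂ : (s + 1)⁻¹ < s⁻¹ := inv_strictAnti₀ hs₀ (by linarith)
  have h₃ : (s + 1)⁻¹ ^ 2 < s⁻¹ ^ 2 := pow_lt_pow_left₀ h₂ (by positivity) two_ne_zero
  exact mul_pos (by linarith) (by linarith)

theorem hasDerivAt_rhoKernelPrimitive {s : ℝ} (hs : 0 < s) :
    HasDerivAt rhoKernelPrimitive (rhoKernel s) s := by
  have hs₀ : s ≠ 0 := hs.ne'
  have hs₁ : s + 1 ≠ 0 := by positivity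
  have h₁ : HasDerivAt (fun s : ℝ => s⁻¹) (-(s ^ 2)⁻¹) s := hasDerivAt_inv hs₀
  have h₂ : HasDerivAt (fun s : ℝ => (s + 1)⁻¹) (-((s + 1) ^ 2)⁻¹) s :=
    (hasDerivAt_inv hs₁).comp_add_const s 1
  have h₃ : 1 - (s + 1)⁻¹ ≠ 0 := by
    rw [sub_ne_zero]; exact (inv_lt_one_of_one_lt₀ (by linarith)).ne'
  have := ((h₁.neg.add (h₂.const_mul 2)).add ((h₁.pow 2).div_const 2)).add
    ((h₂.const_sub 1).log h₃)
  refine this.congr_deriv ?_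
  rw [rhoKernel, show 1 - (s + 1)⁻¹ = s / (s + 1) by field_simp; ring]
  norm_num
  field_simp
  ring

theorem tendsto_rhoKernelPrimitive_atTop : Tendsto rhoKernelPrimitive atTop (𝓝 0) := by
  have h₁ : Tendsto (fun s : ℝ => s⁻¹) atTop (𝓝 0) := tendsto_inv_atTop_zero
  have h₂ : Tendsto (fun s : ℝ => (s + 1)⁻¹) atTop (𝓝 0) :=
    h₁.comp (tendsto_atTop_add_const_right _ 1 tendsto_id)
  have := ((h₁.neg.add (h₂.const_mul 2)).add ((h₁.pow 2).div_const 2)).add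
    ((tendsto_const_nhds.sub h₂).log (by norm_num : (1 : ℝ) - 0 ≠ 0))
  unfold rhoKernelPrimitive
  simpa using this

theorem integral_rhoKernel_Ioi_one : ∫ s in Ioi 1, rhoKernel s = log 2 - 1 / 2 := by
  rw [integral_Ioi_of_hasDerivAt_of_nonneg' (fun s hs => hasDerivAt_rhoKernelPrimitive
    (zero_lt_one.trans_le hs)) (fun s hs => (rhoKernel_pos hs).le) tendsto_rhoKernelPrimitive_atTop]
  norm_num [rhoKernelPrimitive]
  rw [one_div, log_inv]
  ring

theorem image_one_add_rpow_Ioi {t : ℝ} (ht : 0 < t) :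
    (fun y : ℝ => (1 + y) ^ t) '' Ioi 0 = Ioi 1 := by
  ext s
  constructor
  · rintro ⟨y, hy, rfl⟩
    exact one_lt_rpow (by linarith [hy.out]) ht
  · intro hs
    have hs₀ : 0 < s := zero_lt_one.trans hs
    refine ⟨s ^ t⁻¹ - 1, by simpa using one_lt_rpow hs.out (inv_pos.2 ht), ?_⟩
    simp only [add_sub_cancel, ← rpow_mul hs₀.le, inv_mul_cancel₀ ht.ne', rpow_one]

theorem integral_comp_one_add_rpow_Ioi {t : ℝ} (ht : 0 < t) (φ : ℝ → ℝ) :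
    ∫ y in Ioi (0 : ℝ), t * (1 + y) ^ (t - 1) * φ ((1 + y) ^ t) = ∫ s in Ioi 1, φ s := by
  have hderiv (y : ℝ) (hy : y ∈ Ioi (0 : ℝ)) :
      HasDerivWithinAt (fun y : ℝ => (1 + y) ^ t) (t * (1 + y) ^ (t - 1)) (Ioi 0) y := by
    have hy₁ : 0 < 1 + y := by linarith [hy.out]
    simpa using ((hasDerivAt_rpow_const (Or.inl hy₁.ne')).comp_const_add 1 y).hasDerivWithinAt
  have hinj : InjOn (fun y : ℝ => (1 + y) ^ t) (Ioi 0) := StrictMonoOn.injOn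
    fun a ha b _ hab => rpow_lt_rpow (by linarith [ha.out]) (by linarith) ht
  rw [← image_one_add_rpow_Ioi ht, integral_image_eq_integral_abs_deriv_smul measurableSet_Ioi
    hderiv hinj]
  refine setIntegral_congr_fun measurableSet_Ioi fun y hy => ?_
  have hy₁ : 0 < 1 + y := by linarith [hy.out]
  rw [smul_eq_mul, abs_of_pos (by positivity)]


noncomputable def spearmanIntegrand (t : ℝ) (p : ℝ × ℝ) : ℝ :=
  (1 - exp (-p.1)) * (1 - (1 + p.2) ^ (-t)) *
    (t * p.1 * (1 + p.2) ^ (t - 1) * exp (-p.1 * (1 + p.2) ^ t))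

theorem spearmanIntegrand_nonneg {t x y : ℝ} (ht : 0 ≤ t) (hx : 0 ≤ x) (hy : 0 ≤ y) :
    0 ≤ spearmanIntegrand t (x, y) := by
  have h₁ : 0 ≤ 1 - exp (-x) := sub_nonneg.2 (exp_le_one_iff.2 (by linarith))
  have h₂ : 0 ≤ 1 - (1 + y) ^ (-t) :=
    sub_nonneg.2 (rpow_le_one_of_one_le_of_nonpos (by linarith) (by linarith))
  have h₃ : 0 ≤ (1 + y) ^ (t - 1) := rpow_nonneg (by linarith) _
  unfold spearmanIntegrand
  positivity

theorem integral_spearmanIntegrand_slice (t : ℝ) {y : ℝ} (hy : 0 < 1 + y) :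
    ∫ x in Ioi (0 : ℝ), spearmanIntegrand t (x, y) =
      t * (1 + y) ^ (t - 1) * rhoKernel ((1 + y) ^ t) := by
  have hs : 0 < (1 + y) ^ t := rpow_pos_of_pos hy t
  have h (x : ℝ) : spearmanIntegrand t (x, y) = t * (1 + y) ^ (t - 1) * (1 - ((1 + y) ^ t)⁻¹) *
      ((1 - exp (-x)) * (x * exp (-((1 + y) ^ t * x)))) := by
    rw [spearmanIntegrand, rpow_neg hy.le, neg_mul, mul_comm x]; ring
  simp_rw [h]
  rw [integral_const_mul, integral_one_sub_exp_neg_mul_mul_exp_neg_mul_Ioi hs, rhoKernel]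
  ring

theorem setIntegral_spearmanIntegrand {t : ℝ} (ht : 0 < t) :
    ∫ p in Ioi (0 : ℝ) ×ˢ Ioi (0 : ℝ), spearmanIntegrand t p = log 2 - 1 / 2 := by
  have hslice (y : ℝ) (hy : y ∈ Ioi (0 : ℝ)) : ∫ x in Ioi (0 : ℝ), spearmanIntegrand t (x, y) =
      t * (1 + y) ^ (t - 1) * rhoKernel ((1 + y) ^ t) :=
    integral_spearmanIntegrand_slice t (by linarith [hy.out])
  have houter : ∫ y in Ioi (0 : ℝ), t * (1 + y) ^ (t - 1) * rhoKernel ((1 + y) ^ t) =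
      log 2 - 1 / 2 := by
    rw [integral_comp_one_add_rpow_Ioi ht, integral_rhoKernel_Ioi_one]
  rw [Measure.volume_eq_prod, ← Measure.prod_restrict, ← houter,
    ← setIntegral_congr_fun measurableSet_Ioi hslice]
  -- Both integrability conditions hold because the integrals in question are nonzero.
  refine integral_prod_symm_of_nonneg (by unfold spearmanIntegrand; fun_prop) ?_ ?_ ?_
  · filter_upwards [ae_restrict_mem measurableSet_Ioi] with y hy
    filter_upwards [ae_restrict_mem measurableSet_Ioi] with x hx
    exact spearmanIntegrand_nonneg ht.le hx.out.le hy.out.le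
  · filter_upwards [ae_restrict_mem measurableSet_Ioi] with y hy
    refine Integrable.of_integral_ne_zero ?_
    have hy₁ : 1 < 1 + y := by linarith [hy.out]
    rw [hslice y hy]
    exact (mul_pos (mul_pos ht (rpow_pos_of_pos (by linarith) _))
      (rhoKernel_pos (one_lt_rpow hy₁ ht))).ne'
  · refine (Integrable.of_integral_ne_zero ?_).congr
      (ae_restrict_of_forall_mem measurableSet_Ioi fun y hy => (hslice y hy).symm)
    rw [houter]
    linarith [log_two_gt_d9]

/-- For every `t > 0`, the bivariate distribution with density
`f_t(x,y) = t·x·(1+y)^{t−1}·e^{−x(1+y)^t}` on `(0,∞)²`, exponential marginal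
`H(x) = 1 − e^{−x}` and Pareto marginal `G_t(y) = 1 − (1+y)^{−t}` has Spearman's rho
equal to `12·ln 2 − 9`:
`12·∫_{(0,∞)²} (1 − e^{−x})·(1 − (1+y)^{−t})·f_t(x,y) dx dy − 3 = 12·ln 2 − 9`.
In particular `ρ_S` is free of the parameter `t`. -/
theorem spearman_rho_exponential_pareto_family
    (t : ℝ) (ht : 0 < t)
    (f : ℝ → ℝ → ℝ)
    (hf : ∀ x y, f x y = t * x * (1 + y) ^ (t - 1) * Real.exp (-x * (1 + y) ^ t)) :
    12 * (∫ p in Set.Ioi (0 : ℝ) ×ˢ Set.Ioi (0 : ℝ),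
        (1 - Real.exp (-p.1)) * (1 - (1 + p.2) ^ (-t)) * f p.1 p.2) - 3
      = 12 * Real.log 2 - 9 := by
  simp only [hf]
  change 12 * (∫ p in Ioi (0 : ℝ) ×ˢ Ioi (0 : ℝ), spearmanIntegrand t p) - 3 = _
  rw [setIntegral_spearmanIntegrand ht]
  ring
end
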